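/- arXiv:1001.5094 — 2 statements merged into one kernel-verified Lean document; each statement's English description precedes it below -/
import Mathlib

section
/- Let M be an n×n matrix over ℝ and suppose M^k = 1 for some positive integer k. Then the characteristic polynomial p of M is palindromic or anti-palindromic: p.reverse = p or p.reverse = −p. -/
/-!
Averaging `(M ^ j)ᴴ * M ^ j` over a period gives a positive definite `G` with `Mᴴ * G * M = G`,
so `M⁻¹ = G⁻¹ * Mᴴ * G` is similar to `Mᴴ = Mᵀ` and has the same characteristic polynomial `p`
as `M`. On the other hand `charpoly M⁻¹` is a constant multiple of `p.reverse`, so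
`p = C c * p.reverse`; comparing the extreme coefficients of the monic `p` forces `c * c = 1`.
-/

open Polynomial Matrix

theorem Polynomial.Monic.reverse_eq_or_eq_neg_of_eq_C_mul_reverse {R : Type*} [CommRing R]
    [NoZeroDivisors R] {p : R[X]} (hp : p.Monic) {c : R} (h : p = C c * p.reverse) :
    p.reverse = p ∨ p.reverse = -p := by
  have hc : p.coeff 0 = c := by
    simpa [coeff_zero_reverse, hp.leadingCoeff] using congrArg (coeff · 0) h
  have hc2 : c * c = 1 := by
    simpa [coeff_C_mul, coeff_reverse, hc, hp.leadingCoeff] using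
      (congrArg (coeff · p.natDegree) h).symm
  have hrev : p.reverse = C c * p :=
    calc p.reverse = C (c * c) * p.reverse := by rw [hc2, C_1, one_mul]
      _ = C c * p := by rw [C_mul, mul_assoc, ← h]
  rcases mul_self_eq_one_iff.mp hc2 with rfl | rfl
  · simp [hrev]
  · simp [hrev]

namespace Matrix

variable {n : Type*} [Fintype n] [DecidableEq n]

theorem exists_posDef_conjTranspose_mul_mul_eq_of_pow_eq_one {R : Type*} [Ring R]
    [PartialOrder R] [StarRing R] [StarOrderedRing R] [NoZeroDivisors R]
    {M : Matrix n n R} {k : ℕ} (hk : 0 < k) (hM : M ^ k = 1) :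
    ∃ G : Matrix n n R, G.PosDef ∧ Mᴴ * G * M = G := by
  obtain ⟨m, rfl⟩ := Nat.exists_eq_add_one_of_ne_zero hk.ne'
  set f : ℕ → Matrix n n R := fun j ↦ (M ^ j)ᴴ * M ^ j
  refine ⟨∑ j ∈ Finset.range (m + 1), f j, ?_, ?_⟩
  · rw [Finset.sum_range_succ']
    exact PosDef.posSemidef_add (posSemidef_sum _ fun j _ ↦ posSemidef_conjTranspose_mul_self _)
      (by simpa [f] using PosDef.one)
  · have hf : ∀ j, Mᴴ * f j * M = f (j + 1) := fun j ↦ by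
      simp only [f, pow_succ, conjTranspose_mul, mul_assoc]
    have hperiod : f (m + 1) = f 0 := by simp only [f, hM, pow_zero]
    rw [Finset.mul_sum, Finset.sum_mul]
    simp_rw [hf]
    rw [Finset.sum_range_succ' f, Finset.sum_range_succ, hperiod]

theorem charpoly_inv_eq_charpoly_conjTranspose {R : Type*} [CommRing R] [StarRing R]
    {M G : Matrix n n R} (hG : IsUnit G) (hM : Mᴴ * G * M = G) :
    M⁻¹.charpoly = Mᴴ.charpoly := by
  have hinv : M⁻¹ = G⁻¹ * Mᴴ * G := by
    refine inv_eq_left_inv ?_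
    rw [mul_assoc, mul_assoc, ← mul_assoc Mᴴ, hM,
      nonsing_inv_mul G ((isUnit_iff_isUnit_det G).mp hG)]
  rw [hinv]
  simpa using charpoly_units_conj' hG.unit Mᴴ

theorem charpoly_reverse_eq_or_eq_neg_of_charpoly_inv {R : Type*} [CommRing R]
    [NoZeroDivisors R] {M : Matrix n n R} (hM : IsUnit M) (h : M⁻¹.charpoly = M.charpoly) :
    M.charpoly.reverse = M.charpoly ∨ M.charpoly.reverse = -M.charpoly := by
  refine M.charpoly_monic.reverse_eq_or_eq_neg_of_eq_C_mul_reverse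
    (c := (-1) ^ Fintype.card n * Ring.inverse M.det) ?_
  rw [reverse_charpoly, ← h, charpoly_inv M hM, C_mul, C_pow, C_neg, C_1]

end Matrix

theorem charpoly_of_periodic_matrix_palindromic_or_antipalindromic
    (n k : ℕ) (hk : 0 < k) (M : Matrix (Fin n) (Fin n) ℝ) (hM : M ^ k = 1) :
    (Matrix.charpoly M).reverse = Matrix.charpoly M ∨
    (Matrix.charpoly M).reverse = -Matrix.charpoly M := by
  obtain ⟨G, hG, hGM⟩ := exists_posDef_conjTranspose_mul_mul_eq_of_pow_eq_one hk hM
  refine charpoly_reverse_eq_or_eq_neg_of_charpoly_inv (IsUnit.of_pow_eq_one hM hk.ne') ?_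
  rw [charpoly_inv_eq_charpoly_conjTranspose hG.isUnit hGM, conjTranspose_eq_transpose_of_trivial,
    charpoly_transpose]
end

section
/- Let p ∈ ℝ[X] be a monic polynomial such that every complex root z of p (i.e., every root of the image of p in ℂ[X]) has |z| = 1. Then p.reverse = p or p.reverse = −p, i.e., p is palindromic or anti-palindromic. -/
/-!
Over `ℂ` the monic polynomial is `∏ (X - μ)` over its roots, and reversing a factor gives
`X - μ ↦ -μ (X - μ⁻¹)`, so `p.reverse = C c * ∏ (X - μ⁻¹)`. On the unit circle `μ⁻¹ = conj μ`, and the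
roots of a real polynomial are closed under conjugation, so `p.reverse = C c * p`; comparing leading
and constant coefficients gives `c = p.coeff 0` and `c * p.coeff 0 = 1`, hence `c = ±1`.
-/

open Polynomial ComplexConjugate

namespace Polynomial

theorem reverse_multiset_prod {R : Type*} [CommSemiring R] [NoZeroDivisors R] (s : Multiset R[X]) :
    s.prod.reverse = (s.map reverse).prod := by
  induction s using Multiset.induction with
  | empty => simpa using reverse_C (1 : R)
  | cons f s ih => simp [reverse_mul_of_domain, ih]

theorem reverse_X_sub_C {K : Type*} [Field K] {a : K} (ha : a ≠ 0) :
    (X - C a).reverse = C (-a) * (X - C a⁻¹) := by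
  have hX : (X : K[X]).reverse = 1 := by
    rw [← one_mul X, ← C_1, reverse_mul_X, reverse_C]
  rw [sub_eq_add_neg, ← C_neg, reverse_add_C, hX, natDegree_X, pow_one, mul_sub, ← C_mul,
    neg_mul, mul_inv_cancel₀ ha]
  simp only [C_neg, C_1]
  ring

theorem reverse_multiset_prod_X_sub_C {K : Type*} [Field K] {s : Multiset K} (hs : 0 ∉ s) :
    (s.map (X - C ·)).prod.reverse = C (s.map Neg.neg).prod * (s.map (X - C ·⁻¹)).prod := by
  rw [reverse_multiset_prod, Multiset.map_map, map_multiset_prod, Multiset.map_map,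
    ← Multiset.prod_map_mul]
  exact congrArg _ (Multiset.map_congr rfl fun a ha => reverse_X_sub_C (ne_of_mem_of_not_mem ha hs))

theorem Splits.reverse_eq_C_mul_of_roots_map_inv {K : Type*} [Field K] {q : K[X]}
    (hq : q.Splits) (hm : q.Monic) (h0 : 0 ∉ q.roots) (hinv : q.roots.map (·⁻¹) = q.roots) :
    q.reverse = C (q.roots.map Neg.neg).prod * q := by
  have hprod := hq.eq_prod_roots_of_monic hm
  have hinv' : q.roots.map (X - C ·⁻¹) = q.roots.map (X - C ·) := by
    conv_rhs => rw [← hinv, Multiset.map_map]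
    rfl
  calc q.reverse = (q.roots.map (X - C ·)).prod.reverse := congrArg reverse hprod
    _ = C (q.roots.map Neg.neg).prod * (q.roots.map (X - C ·⁻¹)).prod :=
        reverse_multiset_prod_X_sub_C h0
    _ = C (q.roots.map Neg.neg).prod * q := by rw [hinv', ← hprod]

theorem Monic.reverse_eq_or_eq_neg_of_reverse_eq_C_mul {R : Type*} [Ring R] [IsDomain R]
    {p : R[X]} (hp : p.Monic) {c : R} (h : p.reverse = C c * p) :
    p.reverse = p ∨ p.reverse = -p := by
  have hlead : p.trailingCoeff = c := by
    simpa [reverse_leadingCoeff, hp.leadingCoeff] using congrArg (·.leadingCoeff) h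
  have hcoeff : 1 = c * p.coeff 0 := by
    simpa [coeff_zero_reverse, hp.leadingCoeff] using congrArg (coeff · 0) h
  have h0 : p.coeff 0 ≠ 0 := by
    rintro h0
    simp [h0] at hcoeff
  have hc : c * c = 1 := by
    rw [trailingCoeff_eq_coeff_zero h0] at hlead
    rw [hcoeff, hlead]
  rcases mul_self_eq_one_iff.mp hc with rfl | rfl <;> simp [h]

theorem reverse_map_of_injective {R S : Type*} [Semiring R] [Semiring S] {f : R →+* S}
    (hf : Function.Injective f) (p : R[X]) : (p.map f).reverse = p.reverse.map f := by
  rw [reverse, reverse, natDegree_map_eq_of_injective hf, reflect_map]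

theorem map_conj_roots_map_algebraMap (p : ℝ[X]) :
    (p.map (algebraMap ℝ ℂ)).roots.map conj = (p.map (algebraMap ℝ ℂ)).roots := by
  have hconj : (p.map (algebraMap ℝ ℂ)).map (starRingEnd ℂ) = p.map (algebraMap ℝ ℂ) := by
    rw [map_map]
    congr 1
    ext x
    simp
  rw [← (IsAlgClosed.splits _).roots_map_of_injective (star_injective (R := ℂ)), hconj]

end Polynomial

theorem palindromic_or_antipalindromic_of_roots_on_unit_circle
    (p : Polynomial ℝ) (hp : p.Monic)
    (h : ∀ z : ℂ, (p.map (algebraMap ℝ ℂ)).IsRoot z → ‖z‖ = 1) :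
    p.reverse = p ∨ p.reverse = -p := by
  set q := p.map (algebraMap ℝ ℂ)
  have hq : q.Monic := hp.map _
  have hnorm : ∀ z ∈ q.roots, ‖z‖ = 1 := fun z hz => h z (isRoot_of_mem_roots hz)
  have h0 : 0 ∉ q.roots := fun h0 => by simpa using hnorm 0 h0
  have hinv : q.roots.map (·⁻¹) = q.roots := by
    conv_rhs => rw [← map_conj_roots_map_algebraMap p]
    exact Multiset.map_congr rfl fun z hz => Complex.inv_eq_conj (hnorm z hz)
  have hf := (algebraMap ℝ ℂ).injective
  rcases hq.reverse_eq_or_eq_neg_of_reverse_eq_C_mul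
      ((IsAlgClosed.splits q).reverse_eq_C_mul_of_roots_map_inv hq h0 hinv) with hrev | hrev
  · exact .inl <| map_injective _ hf <| by rw [← reverse_map_of_injective hf, hrev]
  · exact .inr <| map_injective _ hf <| by
      rw [← reverse_map_of_injective hf, hrev, Polynomial.map_neg]
end
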